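/- arXiv:2602.09780 — 2 statements merged into one kernel-verified Lean document; each statement's English description precedes it below -/
import Mathlib

section
/- Let G be a pomonoid, C a symmetric monoidal category, T a strong G-graded monad on C, and z ∈ Z(G). If (X, f : X → T^z Y) is a graded central cone of T at (z, Y), then for any morphism g : Y → Z in C, the pair (X, T^z(g) ∘ f) is a graded central cone of T at (z, Z). -/
/-!
Being a graded central cone says that `ι ▷ T^b W` equalises the two double strengths
out of `T^z Y ⊗ T^b W`, into `T^{z*b} (Y ⊗ W)` (extract `T^z` first) and `T^{b*z} (Y ⊗ W)`
(extract `T^b` first). Both double strengths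
are natural in `Y`, so precomposing them with `T^z g ▷ T^b W` amounts to postcomposing with
`T^{z*b} (g ▷ W)`, resp. `T^{b*z} (g ▷ W)`, and the identification `T^{b*z} = T^{z*b}` is natural.
Hence the equation for `ι ≫ T^z g` is the one for `ι` followed by `T^{z*b} (g ▷ W)`.
-/

open CategoryTheory MonoidalCategory

universe v u

variable (G : Type*) [Monoid G] [PartialOrder G] [MulLeftMono G] [MulRightMono G]
variable (C : Type u) [Category.{v} C]

/-- A pomonoid-graded monad on a category `C`, graded by the pomonoid `G`
(a monoid with a partial order for which multiplication is monotone in both arguments). -/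
structure GradedMonad where
  /-- the graded family of endofunctors -/
  T : G → C ⥤ C
  /-- the unit -/
  η : 𝟭 C ⟶ T 1
  /-- the graded multiplication; `(μ a b).app X : T^a (T^b X) ⟶ T^{a*b} X` -/
  μ : ∀ a b : G, T b ⋙ T a ⟶ T (a * b)
  /-- the order natural transformations `T^{a ≤ a'}` -/
  ord : ∀ {a a' : G}, a ≤ a' → (T a ⟶ T a')
  ord_refl : ∀ a : G, ord (le_refl a) = 𝟙 (T a)
  ord_trans : ∀ {a a' a'' : G} (h : a ≤ a') (h' : a' ≤ a''), ord h ≫ ord h' = ord (h.trans h')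
  left_unit : ∀ (a : G) (X : C),
    η.app ((T a).obj X) ≫ (μ 1 a).app X = eqToHom (by rw [one_mul]; rfl)
  right_unit : ∀ (a : G) (X : C),
    (T a).map (η.app X) ≫ (μ a 1).app X = eqToHom (by rw [mul_one]; rfl)
  assoc : ∀ (a b c : G) (X : C),
    (T a).map ((μ b c).app X) ≫ (μ a (b * c)).app X =
      (μ a b).app ((T c).obj X) ≫ (μ (a * b) c).app X ≫ eqToHom (by rw [mul_assoc])
  μ_ord : ∀ {a a' b b' : G} (h : a ≤ a') (h' : b ≤ b') (X : C),
    (μ a b).app X ≫ (ord (mul_le_mul' h h')).app X =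
      (T a).map ((ord h').app X) ≫ (ord h).app ((T b').obj X) ≫ (μ a' b').app X

variable [MonoidalCategory C]

/-- A strong pomonoid-graded monad: a graded monad with a graded strength. -/
structure StrongGradedMonad extends GradedMonad G C where
  /-- the graded strength -/
  τ : ∀ (a : G) (X Y : C), X ⊗ (T a).obj Y ⟶ (T a).obj (X ⊗ Y)
  τ_natural : ∀ (a : G) {X X' Y Y' : C} (f : X ⟶ X') (g : Y ⟶ Y'),
    (f ⊗ₘ (T a).map g) ≫ τ a X' Y' = τ a X Y ≫ (T a).map (f ⊗ₘ g)
  τ_unitor : ∀ (a : G) (X : C),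
    τ a (𝟙_ C) X ≫ (T a).map (λ_ X).hom = (λ_ ((T a).obj X)).hom
  τ_assoc : ∀ (a : G) (X Y Z : C),
    (α_ X Y ((T a).obj Z)).hom ≫ (𝟙 X ⊗ₘ τ a Y Z) ≫ τ a X (Y ⊗ Z) =
      τ a (X ⊗ Y) Z ≫ (T a).map (α_ X Y Z).hom
  τ_η : ∀ (X Y : C), (𝟙 X ⊗ₘ η.app Y) ≫ τ 1 X Y = η.app (X ⊗ Y)
  τ_μ : ∀ (a b : G) (X Y : C),
    (𝟙 X ⊗ₘ (μ a b).app Y) ≫ τ (a * b) X Y =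
      τ a X ((T b).obj Y) ≫ (T a).map (τ b X Y) ≫ (μ a b).app (X ⊗ Y)
  τ_ord : ∀ {a a' : G} (h : a ≤ a') (X Y : C),
    (𝟙 X ⊗ₘ (ord h).app Y) ≫ τ a' X Y = τ a X Y ≫ (ord h).app (X ⊗ Y)

variable {G C}

namespace StrongGradedMonad

variable [BraidedCategory C]

/-- The graded costrength `τ'^a_{X,Y} := T^a(γ) ∘ τ^a ∘ γ`. -/
def costr (M : StrongGradedMonad G C) (a : G) (X Y : C) :
    (M.T a).obj X ⊗ Y ⟶ (M.T a).obj (X ⊗ Y) :=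
  (β_ ((M.T a).obj X) Y).hom ≫ M.τ a Y X ≫ (M.T a).map (β_ Y X).hom

/-- A strong graded monad is commutative when the two double-strength maps agree
(for all gradations `a`, `b` for which `a * b = b * a`, so that the equation typechecks;
in particular if the grading pomonoid is commutative this is required for all pairs). -/
def IsCommutative (M : StrongGradedMonad G C) : Prop :=
  ∀ (a b : G) (h : a * b = b * a) (X Y : C),
    M.costr a X ((M.T b).obj Y) ≫ (M.T a).map (M.τ b X Y) ≫ (M.μ a b).app (X ⊗ Y) =
      M.τ b ((M.T a).obj X) Y ≫ (M.T b).map (M.costr a X Y) ≫ (M.μ b a).app (X ⊗ Y) ≫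
        eqToHom (by rw [h])

/-- A graded central cone of `M` at `(z, X)` (where `z` is central in `G`),
with apex `Z` and map `ι : Z ⟶ T^z X`. -/
def CentralCone (M : StrongGradedMonad G C) (z : G) (hz : ∀ b : G, z * b = b * z)
    (X Z : C) (ι : Z ⟶ (M.T z).obj X) : Prop :=
  ∀ (b : G) (Y : C),
    (ι ⊗ₘ 𝟙 ((M.T b).obj Y)) ≫ M.costr z X ((M.T b).obj Y) ≫
        (M.T z).map (M.τ b X Y) ≫ (M.μ z b).app (X ⊗ Y) =
      (ι ⊗ₘ 𝟙 ((M.T b).obj Y)) ≫ M.τ b ((M.T z).obj X) Y ≫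
        (M.T b).map (M.costr z X Y) ≫ (M.μ b z).app (X ⊗ Y) ≫ eqToHom (by rw [hz b])

/-- A terminal graded central cone at `(z, X)`: a graded central cone through which every
graded central cone at `(z, X)` factors uniquely. -/
def IsTerminalCentralCone (M : StrongGradedMonad G C) (z : G) (hz : ∀ b : G, z * b = b * z)
    (X Z : C) (ι : Z ⟶ (M.T z).obj X) : Prop :=
  M.CentralCone z hz X Z ι ∧
    ∀ (W : C) (f : W ⟶ (M.T z).obj X), M.CentralCone z hz X W f →
      ∃! φ : W ⟶ Z, φ ≫ ι = f

/-- A strong graded monad is centralisable when it has a terminal graded central cone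
at `(z, X)` for every central `z` and every object `X`. -/
def Centralisable (M : StrongGradedMonad G C) : Prop :=
  ∀ (z : G) (hz : ∀ b : G, z * b = b * z) (X : C),
    ∃ (Z : C) (ι : Z ⟶ (M.T z).obj X), M.IsTerminalCentralCone z hz X Z ι

end StrongGradedMonad

namespace StrongGradedMonad

variable (M : StrongGradedMonad G C)

lemma τ_naturality_left (a : G) {X X' : C} (f : X ⟶ X') (Y : C) :
    f ▷ (M.T a).obj Y ≫ M.τ a X' Y = M.τ a X Y ≫ (M.T a).map (f ▷ Y) := by
  simpa using M.τ_natural a f (𝟙 Y)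

variable [BraidedCategory C]

lemma costr_naturality_left (a : G) {X X' : C} (f : X ⟶ X') (Y : C) :
    (M.T a).map f ▷ Y ≫ M.costr a X' Y = M.costr a X Y ≫ (M.T a).map (f ▷ Y) := by
  simp only [costr, BraidedCategory.braiding_naturality_left_assoc]
  have hτ := M.τ_natural a (𝟙 Y) f
  simp only [id_tensorHom] at hτ
  rw [reassoc_of% hτ, ← Functor.map_comp, BraidedCategory.braiding_naturality_right,
    Functor.map_comp, Category.assoc, Category.assoc]

def costrStr (a b : G) (X Y : C) : (M.T a).obj X ⊗ (M.T b).obj Y ⟶ (M.T (a * b)).obj (X ⊗ Y) :=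
  M.costr a X ((M.T b).obj Y) ≫ (M.T a).map (M.τ b X Y) ≫ (M.μ a b).app (X ⊗ Y)

def strCostr (a b : G) (X Y : C) : (M.T a).obj X ⊗ (M.T b).obj Y ⟶ (M.T (b * a)).obj (X ⊗ Y) :=
  M.τ b ((M.T a).obj X) Y ≫ (M.T b).map (M.costr a X Y) ≫ (M.μ b a).app (X ⊗ Y)

lemma costrStr_naturality_left (a b : G) {X X' : C} (f : X ⟶ X') (Y : C) :
    (M.T a).map f ▷ (M.T b).obj Y ≫ M.costrStr a b X' Y =
      M.costrStr a b X Y ≫ (M.T (a * b)).map (f ▷ Y) := by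
  rw [costrStr, costrStr, reassoc_of% M.costr_naturality_left a f, ← Functor.map_comp_assoc,
    τ_naturality_left, Functor.map_comp]
  simp only [Category.assoc]
  exact congrArg _ (congrArg _ ((M.μ a b).naturality (f ▷ Y)))

lemma strCostr_naturality_left (a b : G) {X X' : C} (f : X ⟶ X') (Y : C) :
    (M.T a).map f ▷ (M.T b).obj Y ≫ M.strCostr a b X' Y =
      M.strCostr a b X Y ≫ (M.T (b * a)).map (f ▷ Y) := by
  rw [strCostr, strCostr, reassoc_of% M.τ_naturality_left b ((M.T a).map f),
    ← Functor.map_comp_assoc, costr_naturality_left, Functor.map_comp]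
  simp only [Category.assoc]
  exact congrArg _ (congrArg _ ((M.μ b a).naturality (f ▷ Y)))

lemma centralCone_iff (z : G) (hz : ∀ b : G, z * b = b * z) (X Z : C)
    (ι : Z ⟶ (M.T z).obj X) :
    M.CentralCone z hz X Z ι ↔ ∀ (b : G) (Y : C),
      ι ▷ (M.T b).obj Y ≫ M.costrStr z b X Y =
        ι ▷ (M.T b).obj Y ≫ M.strCostr z b X Y ≫ eqToHom (by rw [hz b]) := by
  simp only [CentralCone, costrStr, strCostr, tensorHom_id, Category.assoc]

end StrongGradedMonad

open StrongGradedMonad in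
/-- Postcomposing a graded central cone with the image of any morphism under `T^z`
yields a graded central cone. -/
theorem centralCone_postcompose
    {G : Type*} [Monoid G] [PartialOrder G] [MulLeftMono G] [MulRightMono G]
    {C : Type u} [Category.{v} C] [MonoidalCategory C] [SymmetricCategory C]
    (M : StrongGradedMonad G C) (z : G) (hz : ∀ b : G, z * b = b * z)
    {X Y Z : C} (f : X ⟶ (M.T z).obj Y) (hf : M.CentralCone z hz Y X f) (g : Y ⟶ Z) :
    M.CentralCone z hz Z X (f ≫ (M.T z).map g) := by
  rw [centralCone_iff] at hf ⊢
  intro b W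
  calc (f ≫ (M.T z).map g) ▷ (M.T b).obj W ≫ M.costrStr z b Z W
      = (f ▷ (M.T b).obj W ≫ M.costrStr z b Y W) ≫ (M.T (z * b)).map (g ▷ W) := by
        rw [comp_whiskerRight, Category.assoc, costrStr_naturality_left, Category.assoc]
    _ = f ▷ (M.T b).obj W ≫ M.strCostr z b Y W ≫ (M.T (b * z)).map (g ▷ W) ≫
          eqToHom (by rw [hz b]) := by
        rw [hf b W]
        simp only [Category.assoc]
        rw [eqToHom_naturality (fun a => (M.T a).map (g ▷ W)) (hz b).symm]
    _ = (f ≫ (M.T z).map g) ▷ (M.T b).obj W ≫ M.strCostr z b Z W ≫ eqToHom (by rw [hz b]) := by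
        rw [comp_whiskerRight, Category.assoc, reassoc_of% strCostr_naturality_left]
end

section
/- Let G be a pomonoid and T a strong G-graded monad on Top, the category of topological spaces and continuous maps, with strength taken with respect to the cartesian monoidal structure of Top. Then T is centralisable, with terminal graded central cone at (z, X) (for z ∈ Z(G)) given by the subspace Z^z X := { t ∈ T^z X | for all b ∈ G, all spaces Y, and all s ∈ T^b Y, μ^{z,b}(T^z(τ^b)(τ'^z(t,s))) = μ^{b,z}(T^b(τ'^z)(τ^b(t,s))) in T^{z∗b}(X × Y) } of T^z X, equipped with the subspace topology, together with the inclusion Z^z X ⊆ T^z X. -/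
open CategoryTheory MonoidalCategory

universe v u

variable (G : Type*) [Monoid G] [PartialOrder G] [MulLeftMono G] [MulRightMono G]
variable (C : Type u) [Category.{v} C]

variable [MonoidalCategory C]

variable {G C}

namespace StrongGradedMonad

variable {G : Type*} [Monoid G] [PartialOrder G] [MulLeftMono G] [MulRightMono G]
  (M : StrongGradedMonad G TopCat.{u}) (z : G) (hz : ∀ b : G, z * b = b * z) (X : TopCat.{u})

def centralPoints : Set ((M.T z).obj X) :=
  {t | ∀ (b : G) (Y : TopCat.{u}) (s : (M.T b).obj Y),
    (M.μ z b).app (X ⊗ Y) ((M.T z).map (M.τ b X Y) (M.costr z X ((M.T b).obj Y) (t, s))) =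
      eqToHom (show (M.T (b * z)).obj (X ⊗ Y) = (M.T (z * b)).obj (X ⊗ Y) by rw [hz b])
        ((M.μ b z).app (X ⊗ Y) ((M.T b).map (M.costr z X Y) (M.τ b ((M.T z).obj X) Y (t, s))))}

/-- In `Top` the central cone equation is an equation of maps out of `W × T^b Y`, so it can be
checked on points. -/
theorem centralCone_iff_forall_mem_centralPoints {W : TopCat.{u}} (f : W ⟶ (M.T z).obj X) :
    M.CentralCone z hz X W f ↔ ∀ w, f w ∈ M.centralPoints z hz X := by
  constructor
  · intro hf w b Y s
    exact ConcreteCategory.congr_hom (hf b Y) ((w, s) : (W ⊗ (M.T b).obj Y : TopCat.{u}))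
  · intro hf b Y
    ext ⟨w, s⟩
    exact hf w b Y s

theorem isTerminalCentralCone_centralPoints :
    M.IsTerminalCentralCone z hz X (TopCat.of (M.centralPoints z hz X))
      (TopCat.ofHom ⟨Subtype.val, continuous_subtype_val⟩) := by
  refine ⟨(M.centralCone_iff_forall_mem_centralPoints z hz X _).2 fun t => t.2, ?_⟩
  intro W f hf
  have hf_mem := (M.centralCone_iff_forall_mem_centralPoints z hz X f).1 hf
  refine ⟨TopCat.ofHom ⟨fun w => ⟨f w, hf_mem w⟩, f.hom.continuous.subtype_mk _⟩, rfl, ?_⟩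
  intro φ hφ
  exact TopCat.hom_ext <| ContinuousMap.ext fun w => Subtype.ext (ConcreteCategory.congr_hom hφ w)

theorem topCat_centralisable : M.Centralisable :=
  fun z hz X => ⟨_, _, M.isTerminalCentralCone_centralPoints z hz X⟩

end StrongGradedMonad

open StrongGradedMonad in
/-- Every strong graded monad on `Top` (with respect to the cartesian monoidal structure) is
centralisable: the terminal graded central cone at `(z, X)` is given by the subspace of `T^z X`
of all points commuting (via the two double-strength composites) with every point of every
`T^b Y`, with the subspace topology, together with the inclusion. -/
theorem topCat_terminalCentralCone
    {G : Type*} [Monoid G] [PartialOrder G] [MulLeftMono G] [MulRightMono G]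
    (M : StrongGradedMonad G TopCat.{u}) (z : G) (hz : ∀ b : G, z * b = b * z) (X : TopCat.{u}) :
    M.IsTerminalCentralCone z hz X
      (TopCat.of {t : (M.T z).obj X //
        ∀ (b : G) (Y : TopCat.{u}) (s : (M.T b).obj Y),
          (M.μ z b).app (X ⊗ Y)
              ((M.T z).map (M.τ b X Y) (M.costr z X ((M.T b).obj Y) (t, s))) =
            eqToHom (show (M.T (b * z)).obj (X ⊗ Y) = (M.T (z * b)).obj (X ⊗ Y) by rw [hz b])
              ((M.μ b z).app (X ⊗ Y)
                ((M.T b).map (M.costr z X Y) (M.τ b ((M.T z).obj X) Y (t, s))))})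
      (TopCat.ofHom ⟨Subtype.val, continuous_subtype_val⟩) ∧
    M.Centralisable :=
  ⟨M.isTerminalCentralCone_centralPoints z hz X, M.topCat_centralisable⟩
end
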